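/- Assume 1/2 < β < 1 and δ = −1/2. Let (μ_t)_{t>0} be an ATS mixing family and σ̂ an ATM implied volatility for (μ_t). Then the skew term satisfies ξ̂_t → −√(π/2) as t → 0⁺. -/

import Mathlib

open MeasureTheory Real Filter Set Topology Asymptotics

/-- The ATS Laplace transform `L_t(u)` with parameters `α ∈ (0,1)`, `k̄ > 0`, `β ∈ ℝ`,
where `k_t = k̄·t^β`. -/
noncomputable def ATSLaplace (α kbar β : ℝ) (t u : ℝ) : ℝ :=
  Real.exp ((t / (kbar * t ^ β)) * ((1 - α) / α) *
    (1 - (1 + u * (kbar * t ^ β) / ((1 - α) * t)) ^ α))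

/-- Standard normal cumulative distribution function. -/
noncomputable def stdN (z : ℝ) : ℝ :=
  (Real.sqrt (2 * Real.pi))⁻¹ * ∫ x in Set.Iic z, Real.exp (-x ^ 2 / 2)

/-- Standard normal probability density function. -/
noncomputable def stdNd (z : ℝ) : ℝ :=
  (Real.sqrt (2 * Real.pi))⁻¹ * Real.exp (-z ^ 2 / 2)

/-- The drift `φ_t`, defined by `φ_t·t = −ln L_t(t·σ̄²·η_t)` with `η_t = η̄·t^δ`. -/
noncomputable def ATSphi (α kbar σbar ηbar β δ : ℝ) (t : ℝ) : ℝ :=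
  -Real.log (ATSLaplace α kbar β t (t * σbar ^ 2 * (ηbar * t ^ δ))) / t

/-- The quantity `l_t^z = −σ̄·η_t·√(z·t) + φ_t·√t/(σ̄·√z)`. -/
noncomputable def ATSl (α kbar σbar ηbar β δ : ℝ) (t z : ℝ) : ℝ :=
  -(σbar * (ηbar * t ^ δ)) * Real.sqrt (z * t) +
    ATSphi α kbar σbar ηbar β δ t * Real.sqrt t / (σbar * Real.sqrt z)

/-- The ATM ATS call price `C_t`. -/
noncomputable def ATSCall (α kbar σbar ηbar β δ : ℝ) (μ : Measure ℝ) (t : ℝ) : ℝ :=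
  ∫ z, (Real.exp (ATSphi α kbar σbar ηbar β δ t * t - t * σbar ^ 2 * (ηbar * t ^ δ) * z) *
      stdN (ATSl α kbar σbar ηbar β δ t z + σbar * Real.sqrt (z * t) / 2) -
      stdN (ATSl α kbar σbar ηbar β δ t z - σbar * Real.sqrt (z * t) / 2)) ∂μ

/-- The skew term `ξ̂_t`. -/
noncomputable def ATSSkew (α kbar σbar ηbar β δ : ℝ) (μ : Measure ℝ) (σhat : ℝ → ℝ)
    (t : ℝ) : ℝ :=
  (stdN (-(σhat t * Real.sqrt t / 2)) -
      ∫ z, stdN (ATSl α kbar σbar ηbar β δ t z - σbar * Real.sqrt (z * t) / 2) ∂μ) /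
    stdNd (-(σhat t * Real.sqrt t / 2))

/-!
With `δ = -1/2` one has `η_t √(z t) = η̄ √z`, and the bound `(1+y)^α - 1 ≥ α y / (1+y)` on the
ATS exponent gives `φ_t √t ≥ σ̄² η̄ / (1 + y_t)` with `y_t = O(t^(β-1/2)) → 0`. Hence
`l_t^z - σ̄ √(z t) / 2 → +∞` as `(t, z) → (0⁺, 0⁺)`. Since `β < 1`, `L_t(1) → 1`, so `μ_t`
concentrates on `(0, z₀)` for every `z₀ > 0` (it has no atom at `0` because `L_t(u) → 0` as
`u → ∞`), and therefore `I_t := ∫ N(l_t^z - σ̄ √(z t) / 2) dμ_t → 1`. As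
`e^{φ_t t} L_t(t σ̄² η_t) = 1`, the call price is at most `1 - I_t`, which forces `σ̂_t √t → 0`.
The skew term thus tends to `(1/2 - 1) / N'(0) = -√(π/2)`.
-/

open ProbabilityTheory

lemma stdN_eq_cdf : stdN = cdf (gaussianReal 0 1) := by
  ext z
  rw [cdf_eq_real, measureReal_def, gaussianReal_apply_eq_integral _ one_ne_zero,
    ENNReal.toReal_ofReal (setIntegral_nonneg measurableSet_Iic
      fun x _ ↦ gaussianPDFReal_nonneg _ _ x), stdN, ← integral_const_mul]
  simp [gaussianPDFReal]

lemma stdN_nonneg (z : ℝ) : 0 ≤ stdN z := stdN_eq_cdf ▸ cdf_nonneg _ z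

lemma stdN_le_one (z : ℝ) : stdN z ≤ 1 := stdN_eq_cdf ▸ cdf_le_one _ z

lemma tendsto_stdN_atTop : Tendsto stdN atTop (𝓝 1) := stdN_eq_cdf ▸ tendsto_cdf_atTop _

lemma strictMono_stdN : StrictMono stdN := by
  intro a b hab
  have hvol : volume (Ioc a b) ≠ 0 := by simp [hab]
  have hpos : gaussianReal 0 1 (Ioc a b) ≠ 0 :=
    fun h ↦ hvol (gaussianReal_absolutelyContinuous' 0 one_ne_zero h)
  rw [← measure_cdf (gaussianReal 0 1), StieltjesFunction.measure_Ioc, ne_eq,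
    ENNReal.ofReal_eq_zero, not_le, sub_pos, ← stdN_eq_cdf] at hpos
  exact hpos

@[fun_prop]
lemma measurable_stdN : Measurable stdN := strictMono_stdN.monotone.measurable

lemma stdN_neg (z : ℝ) : stdN (-z) = 1 - stdN z := by
  have hsymm : (gaussianReal 0 1).map (fun x ↦ -x) = gaussianReal 0 1 := by
    simpa using gaussianReal_map_neg (μ := 0) (v := 1)
  have := nullSingletonClass_gaussianReal (μ := (0:ℝ)) (v := 1) one_ne_zero
  have hpre : (fun x : ℝ ↦ -x) ⁻¹' Iic (-z) = Ici z := by ext; simp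
  rw [stdN_eq_cdf, cdf_eq_real, cdf_eq_real, ← hsymm, map_measureReal_apply measurable_neg
    measurableSet_Iic, hpre, hsymm, ← measureReal_congr Ioi_ae_eq_Ici, ← compl_Iic,
    probReal_compl_eq_one_sub measurableSet_Iic]

lemma stdN_zero : stdN 0 = 1 / 2 := by
  linarith [neg_zero (G := ℝ) ▸ stdN_neg 0]

lemma continuous_stdN : Continuous stdN := by
  have hint : Integrable (fun x : ℝ ↦ exp (-x ^ 2 / 2)) := by
    simpa [neg_div, div_eq_inv_mul] using integrable_exp_neg_mul_sq (by norm_num : (0 : ℝ) < 2⁻¹)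
  refine continuous_iff_continuousAt.2 fun a ↦ ContinuousAt.const_mul ?_ _
  exact (hint.integrableOn.continuousOn_Iic_primitive_Iic (a₀ := a + 1)).continuousAt
    (Iic_mem_nhds (lt_add_one a))

lemma tendsto_zero_of_stdN_sub_stdN_neg_le_one_sub {ι : Type*} {l : Filter ι} {s I : ι → ℝ}
    (hs : ∀ᶠ i in l, 0 ≤ s i) (hI : Tendsto I l (𝓝 1))
    (hle : ∀ᶠ i in l, stdN (s i) - stdN (-s i) ≤ 1 - I i) : Tendsto s l (𝓝 0) := by
  refine tendsto_order.2 ⟨fun a ha ↦ hs.mono fun i hi ↦ ha.trans_le hi, fun a ha ↦ ?_⟩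
  have hgap : 0 < stdN a - stdN (-a) := sub_pos.2 (strictMono_stdN (neg_lt_self ha))
  filter_upwards [hle, (tendsto_order.1 hI).1 _ (sub_lt_self 1 hgap)] with i hi hIi
  by_contra! has
  linarith [strictMono_stdN.monotone has, strictMono_stdN.monotone (neg_le_neg has)]

lemma stdNd_zero : stdNd 0 = (√(2 * π))⁻¹ := by simp [stdNd]

lemma continuous_stdNd : Continuous stdNd := by unfold stdNd; fun_prop

lemma stdN_zero_sub_one_div_stdNd_zero : (stdN 0 - 1) / stdNd 0 = -√(π / 2) := by
  have h2π : √(2 * π) = 2 * √(π / 2) := by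
    rw [show 2 * π = 2 ^ 2 * (π / 2) by ring, sqrt_mul (by positivity), sqrt_sq zero_le_two]
  rw [stdN_zero, stdNd_zero, div_inv_eq_mul, h2π]
  ring

section LaplaceOnHalfLine

variable {μ : Measure ℝ}

lemma ae_nonneg_of_measure_Iio (hμ : μ (Iio 0) = 0) : ∀ᵐ x ∂μ, 0 ≤ x :=
  (measure_eq_zero_iff_ae_notMem.1 hμ).mono fun _ hx ↦ not_lt.1 hx

lemma integrable_exp_neg_mul [IsFiniteMeasure μ] (hμ : μ (Iio 0) = 0) {u : ℝ} (hu : 0 ≤ u) :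
    Integrable (fun x ↦ exp (-u * x)) μ := by
  refine (integrable_const 1).mono' (by fun_prop) ?_
  filter_upwards [ae_nonneg_of_measure_Iio hμ] with x hx
  rw [norm_of_nonneg (exp_pos _).le, exp_le_one_iff]
  nlinarith

lemma measure_Iic_zero_eq_zero_of_tendsto_integral_exp [IsFiniteMeasure μ] (hμ : μ (Iio 0) = 0)
    (hL : Tendsto (fun u ↦ ∫ x, exp (-u * x) ∂μ) atTop (𝓝 0)) : μ (Iic 0) = 0 := by
  have hatom : ∀ u ≥ (0 : ℝ), μ.real {0} ≤ ∫ x, exp (-u * x) ∂μ := fun u hu ↦ by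
    simpa [measureReal_def] using setIntegral_le_integral (s := {0})
      (integrable_exp_neg_mul hμ hu) (Eventually.of_forall fun x ↦ (exp_pos (-u * x)).le)
  have h0 : μ {0} = 0 := by
    rw [← measureReal_eq_zero_iff]
    exact le_antisymm (ge_of_tendsto hL (eventually_ge_atTop 0 |>.mono hatom))
      measureReal_nonneg
  rw [← Iio_union_right]
  exact measure_union_null hμ h0

lemma measureReal_Ici_mul_le_one_sub_integral_exp [IsProbabilityMeasure μ]
    (hμ : μ (Iio 0) = 0) (z₀ : ℝ) :
    μ.real (Ici z₀) * (1 - exp (-z₀)) ≤ 1 - ∫ x, exp (-x) ∂μ := by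
  have hexp : Integrable (fun x ↦ exp (-x)) μ := by
    simpa using integrable_exp_neg_mul hμ zero_le_one
  have hmarkov := mul_meas_ge_le_integral_of_nonneg (f := fun x ↦ 1 - exp (-x))
    ((ae_nonneg_of_measure_Iio hμ).mono fun x hx ↦ by simpa using hx)
    ((integrable_const 1).sub hexp) (1 - exp (-z₀))
  have hset : {x | 1 - exp (-z₀) ≤ 1 - exp (-x)} = Ici z₀ := by
    ext x
    simp only [mem_ofPred_eq, mem_Ici, sub_le_sub_iff_left, exp_le_exp, neg_le_neg_iff]
  rwa [hset, integral_sub (integrable_const 1) hexp, integral_const, probReal_univ, one_smul,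
    mul_comm] at hmarkov

end LaplaceOnHalfLine

section ConcentrationAtZero

variable {ι : Type*} {l : Filter ι} {μ : ι → Measure ℝ}

lemma tendsto_measureReal_Ioo_zero (hprob : ∀ᶠ i in l, IsProbabilityMeasure (μ i))
    (hsupp : ∀ᶠ i in l, μ i (Iic 0) = 0) (hL : Tendsto (fun i ↦ ∫ x, exp (-x) ∂μ i) l (𝓝 1))
    {z₀ : ℝ} (hz₀ : 0 < z₀) : Tendsto (fun i ↦ (μ i).real (Ioo 0 z₀)) l (𝓝 1) := by
  have hc : 0 < 1 - exp (-z₀) := sub_pos.2 (exp_lt_one_iff.2 (neg_lt_zero.2 hz₀))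
  have hlower : Tendsto (fun i ↦ 1 - (1 - ∫ x, exp (-x) ∂μ i) / (1 - exp (-z₀))) l (𝓝 1) := by
    have hone : Tendsto (fun _ : ι ↦ (1 : ℝ)) l (𝓝 1) := tendsto_const_nhds
    simpa using hone.sub ((hone.sub hL).div_const (1 - exp (-z₀)))
  refine tendsto_of_tendsto_of_tendsto_of_le_of_le' hlower tendsto_const_nhds ?_ ?_
  · filter_upwards [hprob, hsupp] with i hi hi0
    have hIci : (μ i).real (Ici z₀) ≤ (1 - ∫ x, exp (-x) ∂μ i) / (1 - exp (-z₀)) :=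
      (le_div_iff₀ hc).2 (measureReal_Ici_mul_le_one_sub_integral_exp
        (measure_mono_null Iio_subset_Iic_self hi0) z₀)
    have hcompl : (μ i).real (Ioo 0 z₀)ᶜ ≤ (μ i).real (Ici z₀) :=
      calc _ ≤ (μ i).real (Iic 0 ∪ Ici z₀) :=
            measureReal_mono fun x hx ↦ by
              simp only [mem_compl_iff, mem_Ioo, not_and_or, not_lt] at hx
              exact hx
        _ ≤ (μ i).real (Iic 0) + (μ i).real (Ici z₀) := measureReal_union_le _ _
        _ = (μ i).real (Ici z₀) := by simp [measureReal_def, hi0]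
    rw [probReal_compl_eq_one_sub measurableSet_Ioo] at hcompl
    linarith
  · filter_upwards [hprob] with i hi
    exact measureReal_le_one

lemma tendsto_integral_of_tendsto_nhdsGT_zero (hprob : ∀ᶠ i in l, IsProbabilityMeasure (μ i))
    (hconc : ∀ z₀ > 0, Tendsto (fun i ↦ (μ i).real (Ioo 0 z₀)) l (𝓝 1))
    {f : ι → ℝ → ℝ} (hf : Tendsto (Function.uncurry f) (l ×ˢ 𝓝[>] 0) (𝓝 1))
    (hf0 : ∀ i x, 0 ≤ f i x) (hf1 : ∀ i x, f i x ≤ 1) (hmeas : ∀ i, Measurable (f i)) :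
    Tendsto (fun i ↦ ∫ x, f i x ∂μ i) l (𝓝 1) := by
  have hint : ∀ᶠ i in l, Integrable (f i) (μ i) := hprob.mono fun i hi ↦
    (integrable_const 1).mono' (hmeas i).aestronglyMeasurable
      (ae_of_all _ fun x ↦ by simpa [abs_of_nonneg (hf0 i x)] using hf1 i x)
  refine tendsto_order.2 ⟨fun a ha ↦ ?_, fun a ha ↦ ?_⟩
  · obtain ⟨ε, hε0, hε1, hεa⟩ : ∃ ε : ℝ, 0 < ε ∧ ε < 1 ∧ a < (1 - ε) * (1 - ε) := by
      rcases lt_or_ge a 0 with ha0 | ha0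
      · exact ⟨1 / 2, by norm_num, by norm_num, by nlinarith⟩
      · exact ⟨(1 - a) / 3, by linarith, by linarith, by nlinarith⟩
    obtain ⟨P, hP, Q, hQ, hPQ⟩ := eventually_prod_iff.1
      ((tendsto_order.1 hf).1 (1 - ε) (by linarith))
    obtain ⟨z₀, hz₀, hQz₀⟩ := mem_nhdsGT_iff_exists_Ioo_subset.1 hQ
    filter_upwards [hprob, hint, hP, (tendsto_order.1 (hconc z₀ hz₀)).1 (1 - ε) (by linarith)]
      with i hi hfi hPi hμi
    have hS : ∀ x ∈ Ioo 0 z₀, 1 - ε ≤ f i x := fun x hx ↦ (hPQ hPi (hQz₀ hx)).le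
    calc a < (1 - ε) * (1 - ε) := hεa
      _ ≤ (1 - ε) * (μ i).real (Ioo 0 z₀) := by gcongr
      _ = ∫ x in Ioo 0 z₀, (1 - ε) ∂μ i := by rw [setIntegral_const, smul_eq_mul, mul_comm]
      _ ≤ ∫ x in Ioo 0 z₀, f i x ∂μ i :=
        setIntegral_mono_on (integrableOn_const (measure_ne_top _ _)) hfi.integrableOn
          measurableSet_Ioo hS
      _ ≤ ∫ x, f i x ∂μ i := setIntegral_le_integral hfi (ae_of_all _ (hf0 i))
  · filter_upwards [hprob, hint] with i hi hfi
    calc ∫ x, f i x ∂μ i ≤ ∫ _, 1 ∂μ i := integral_mono hfi (integrable_const 1) (hf1 i)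
      _ = 1 := by simp
      _ < a := ha

end ConcentrationAtZero

lemma tendsto_rpow_nhdsGT_zero {p : ℝ} (hp : 0 < p) :
    Tendsto (fun x : ℝ ↦ x ^ p) (𝓝[>] 0) (𝓝 0) := by
  simpa [zero_rpow hp.ne'] using
    ((continuous_rpow_const hp.le).tendsto 0).mono_left nhdsWithin_le_nhds

lemma mul_div_one_add_le_rpow_one_add_sub_one {α x : ℝ} (hα0 : 0 < α) (hα1 : α < 1)
    (hx : 0 ≤ x) : α * x / (1 + x) ≤ (1 + x) ^ α - 1 := by
  have hx1 : 0 < 1 + x := by linarith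
  have hd : 0 < 1 + (1 - α) * x := by nlinarith
  have hbern : (1 + x) ^ (1 - α) ≤ 1 + (1 - α) * x :=
    rpow_one_add_le_one_add_mul_self (by linarith) (by linarith) (by linarith)
  have hsplit : (1 + x) ^ α * (1 + x) ^ (1 - α) = 1 + x := by
    rw [← rpow_add hx1]; norm_num
  have hquot : (1 + x) / (1 + (1 - α) * x) ≤ (1 + x) ^ α := by
    rw [div_le_iff₀ hd]
    calc 1 + x = (1 + x) ^ α * (1 + x) ^ (1 - α) := hsplit.symm
      _ ≤ (1 + x) ^ α * (1 + (1 - α) * x) := by gcongr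
  calc α * x / (1 + x) ≤ α * x / (1 + (1 - α) * x) := by gcongr; nlinarith
    _ = (1 + x) / (1 + (1 - α) * x) - 1 := by rw [div_sub_one hd.ne']; ring_nf
    _ ≤ (1 + x) ^ α - 1 := by linarith

lemma tendsto_mul_one_sub_rpow_one_add_div {α v : ℝ} (hα0 : 0 < α) (hα1 : α < 1)
    (hv : 0 ≤ v) : Tendsto (fun w ↦ w * (1 - (1 + v / w) ^ α)) (𝓝[>] 0) (𝓝 0) := by
  have hlim : Tendsto (fun w : ℝ ↦ -(v ^ α * w ^ (1 - α))) (𝓝[>] 0) (𝓝 0) := by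
    simpa using ((tendsto_rpow_nhdsGT_zero (sub_pos.2 hα1)).const_mul (v ^ α)).neg
  refine tendsto_of_tendsto_of_tendsto_of_le_of_le' hlim tendsto_const_nhds ?_ ?_
  all_goals filter_upwards [self_mem_nhdsWithin] with w (hw : 0 < w)
  · have hsub : (1 + v / w) ^ α ≤ 1 + (v / w) ^ α := by
      simpa using rpow_add_le_add_rpow zero_le_one (by positivity) hα0.le hα1.le
    have hw' : w * (v / w) ^ α = v ^ α * w ^ (1 - α) := by
      rw [div_rpow hv hw.le, rpow_sub hw, rpow_one]
      field_simp
    nlinarith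
  · have : 1 ≤ (1 + v / w) ^ α := one_le_rpow (by simp; positivity) hα0.le
    nlinarith

lemma tendsto_sqrt_nhdsGT_zero : Tendsto (fun z : ℝ ↦ √z) (𝓝[>] 0) (𝓝[>] 0) := by
  refine tendsto_nhdsWithin_iff.2 ⟨?_, ?_⟩
  · simpa using (continuous_sqrt.tendsto 0).mono_left nhdsWithin_le_nhds
  · filter_upwards [self_mem_nhdsWithin] with z (hz : 0 < z) using sqrt_pos.2 hz

lemma rpow_neg_half_mul_sqrt {t : ℝ} (ht : 0 < t) : t ^ (-(1 / 2) : ℝ) * √t = 1 := by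
  rw [sqrt_eq_rpow, ← rpow_add ht]
  norm_num

section ATS

variable {α kbar σbar ηbar β δ : ℝ}

lemma tendsto_ATSLaplace_atTop (hα0 : 0 < α) (hα1 : α < 1) (hk : 0 < kbar) {t : ℝ}
    (ht : 0 < t) : Tendsto (ATSLaplace α kbar β t) atTop (𝓝 0) := by
  have := rpow_pos_of_pos ht β
  have := sub_pos.2 hα1
  have hb : 0 < kbar * t ^ β / ((1 - α) * t) := by positivity
  have hinner : Tendsto (fun u ↦ 1 + u * (kbar * t ^ β) / ((1 - α) * t)) atTop atTop := by
    simpa [mul_div_assoc] using tendsto_atTop_add_const_left _ 1 (tendsto_id.atTop_mul_const hb)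
  have hexponent : Tendsto (fun u ↦ 1 - (1 + u * (kbar * t ^ β) / ((1 - α) * t)) ^ α)
      atTop atBot := by
    simpa [sub_eq_add_neg] using tendsto_atBot_add_const_left _ 1
      (tendsto_neg_atTop_atBot.comp ((tendsto_rpow_atTop hα0).comp hinner))
  have ha : 0 < t / (kbar * t ^ β) * ((1 - α) / α) := by positivity
  exact tendsto_exp_atBot.comp (hexponent.const_mul_atBot ha)

lemma tendsto_ATSLaplace_nhdsGT_zero (hα0 : 0 < α) (hα1 : α < 1) (hk : 0 < kbar) (hβ : β < 1)
    {u : ℝ} (hu : 0 ≤ u) :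
    Tendsto (fun t ↦ ATSLaplace α kbar β t u) (𝓝[>] 0) (𝓝 1) := by
  set w : ℝ → ℝ := fun t ↦ t / (kbar * t ^ β)
  have hw : Tendsto w (𝓝[>] 0) (𝓝[>] 0) := by
    refine tendsto_nhdsWithin_iff.2 ⟨?_, ?_⟩
    · refine (by simpa using (tendsto_rpow_nhdsGT_zero (sub_pos.2 hβ)).div_const kbar :
        Tendsto (fun t : ℝ ↦ t ^ (1 - β) / kbar) _ _).congr' ?_
      filter_upwards [self_mem_nhdsWithin] with t (ht : 0 < t)
      simp only [w, rpow_sub ht, rpow_one]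
      field_simp
    · filter_upwards [self_mem_nhdsWithin] with t (ht : 0 < t)
      exact div_pos ht (mul_pos hk (rpow_pos_of_pos ht β))
  have hlim := (tendsto_mul_one_sub_rpow_one_add_div hα0 hα1
    (div_nonneg hu (sub_pos.2 hα1).le)).comp hw
  have hexp : Tendsto (fun t ↦ exp ((1 - α) / α * (w t * (1 - (1 + u / (1 - α) / w t) ^ α))))
      (𝓝[>] 0) (𝓝 1) := by
    have hscaled := hlim.const_mul ((1 - α) / α)
    rw [mul_zero] at hscaled
    have := (continuous_exp.tendsto 0).comp hscaled
    rwa [exp_zero] at this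
  refine hexp.congr' ?_
  filter_upwards [self_mem_nhdsWithin] with t (ht : 0 < t)
  have := rpow_pos_of_pos ht β
  have : 0 < 1 - α := sub_pos.2 hα1
  simp only [ATSLaplace, w]
  congr 1
  field_simp

lemma div_one_add_le_neg_log_ATSLaplace (hα0 : 0 < α) (hα1 : α < 1) (hk : 0 < kbar) {t u : ℝ}
    (ht : 0 < t) (hu : 0 ≤ u) :
    u / (1 + u * (kbar * t ^ β) / ((1 - α) * t)) ≤ -log (ATSLaplace α kbar β t u) := by
  have := rpow_pos_of_pos ht β
  have := sub_pos.2 hα1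
  set y := u * (kbar * t ^ β) / ((1 - α) * t) with hy
  set a := t / (kbar * t ^ β) * ((1 - α) / α) with ha
  have hy0 : 0 ≤ y := by positivity
  calc u / (1 + y) = a * (α * y / (1 + y)) := by rw [ha, hy]; field_simp
    _ ≤ a * ((1 + y) ^ α - 1) := by
      gcongr
      exact mul_div_one_add_le_rpow_one_add_sub_one hα0 hα1 hy0
    _ = -log (ATSLaplace α kbar β t u) := by rw [ATSLaplace, log_exp]; ring

lemma eventually_le_ATSphi_mul_sqrt (hα0 : 0 < α) (hα1 : α < 1) (hk : 0 < kbar)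
    (hσ : 0 < σbar) (hη : 0 < ηbar) (hβ : 1 / 2 < β) :
    ∀ᶠ t in 𝓝[>] 0, σbar ^ 2 * ηbar / 2 ≤ ATSphi α kbar σbar ηbar β (-(1 / 2)) t * √t := by
  set u : ℝ → ℝ := fun t ↦ t * σbar ^ 2 * (ηbar * t ^ (-(1 / 2) : ℝ))
  set y : ℝ → ℝ := fun t ↦ u t * (kbar * t ^ β) / ((1 - α) * t)
  have := sub_pos.2 hα1
  have hy : Tendsto y (𝓝[>] 0) (𝓝 0) := by
    have hlim := (tendsto_rpow_nhdsGT_zero (sub_pos.2 hβ)).const_mul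
      (σbar ^ 2 * ηbar * kbar / (1 - α))
    rw [mul_zero] at hlim
    refine hlim.congr' ?_
    filter_upwards [self_mem_nhdsWithin] with t (ht : 0 < t)
    simp only [y, u, rpow_sub ht, rpow_neg ht.le]
    field_simp
  filter_upwards [self_mem_nhdsWithin, hy.eventually (eventually_le_nhds one_pos)]
    with t (ht : 0 < t) hy1
  have hu : 0 ≤ u t := by have := rpow_pos_of_pos ht (-(1 / 2)); positivity
  have hy0 : 0 ≤ y t := by have := rpow_pos_of_pos ht β; positivity
  have hlog : u t / (1 + y t) ≤ -log (ATSLaplace α kbar β t (u t)) :=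
    div_one_add_le_neg_log_ATSLaplace hα0 hα1 hk ht hu
  have hut : u t / t * √t = σbar ^ 2 * ηbar :=
    calc u t / t * √t = σbar ^ 2 * ηbar * (t ^ (-(1 / 2) : ℝ) * √t) := by
          simp only [u]; field_simp
      _ = σbar ^ 2 * ηbar := by rw [rpow_neg_half_mul_sqrt ht, mul_one]
  calc σbar ^ 2 * ηbar / 2 ≤ σbar ^ 2 * ηbar / (1 + y t) := by gcongr; linarith
    _ = u t / (1 + y t) / t * √t := by rw [← hut]; ring
    _ ≤ -log (ATSLaplace α kbar β t (u t)) / t * √t := by gcongr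
    _ = ATSphi α kbar σbar ηbar β (-(1 / 2)) t * √t := rfl

lemma ATSl_sub_eq {t z : ℝ} (ht : 0 < t) (hz : 0 ≤ z) :
    ATSl α kbar σbar ηbar β (-(1 / 2)) t z - σbar * √(z * t) / 2 =
      ATSphi α kbar σbar ηbar β (-(1 / 2)) t * √t / (σbar * √z) - σbar * ηbar * √z
        - σbar * √z * √t / 2 := by
  rw [ATSl, sqrt_mul hz]
  linear_combination (-(σbar * ηbar * √z)) * rpow_neg_half_mul_sqrt ht

lemma tendsto_ATSl_sub_atTop (hα0 : 0 < α) (hα1 : α < 1) (hk : 0 < kbar) (hσ : 0 < σbar)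
    (hη : 0 < ηbar) (hβ : 1 / 2 < β) :
    Tendsto (fun p : ℝ × ℝ ↦
        ATSl α kbar σbar ηbar β (-(1 / 2)) p.1 p.2 - σbar * √(p.2 * p.1) / 2)
      (𝓝[>] 0 ×ˢ 𝓝[>] 0) atTop := by
  have hbound : Tendsto (fun z ↦ σbar * ηbar / 2 * (√z)⁻¹ + -((σbar * ηbar + σbar / 2) * √z))
      (𝓝[>] 0) atTop := by
    refine ((tendsto_inv_nhdsGT_zero.comp tendsto_sqrt_nhdsGT_zero).const_mul_atTop
      (by positivity)).atTop_add (C := 0) ?_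
    simpa using ((tendsto_sqrt_nhdsGT_zero.mono_right nhdsWithin_le_nhds).const_mul
      (σbar * ηbar + σbar / 2)).neg
  refine tendsto_atTop_mono' _ ?_ (hbound.comp tendsto_snd)
  have ht : ∀ᶠ t in 𝓝[>] (0 : ℝ), 0 < t ∧ t < 1 := Ioo_mem_nhdsGT one_pos
  filter_upwards [(ht.and (eventually_le_ATSphi_mul_sqrt hα0 hα1 hk hσ hη hβ)).prod_mk
    self_mem_nhdsWithin] with ⟨t, z⟩ ⟨⟨⟨ht0, ht1⟩, hφ⟩, (hz : 0 < z)⟩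
  have hsz := sqrt_pos.2 hz
  have hst : √t ≤ 1 := sqrt_le_one.2 ht1.le
  rw [Function.comp_apply, ATSl_sub_eq ht0 hz.le]
  have hφz : σbar ^ 2 * ηbar / 2 / (σbar * √z) ≤
      ATSphi α kbar σbar ηbar β (-(1 / 2)) t * √t / (σbar * √z) := by gcongr
  have hsplit : σbar ^ 2 * ηbar / 2 / (σbar * √z) = σbar * ηbar / 2 * (√z)⁻¹ := by
    field_simp
  nlinarith [mul_le_mul_of_nonneg_left hst (by positivity : 0 ≤ σbar * √z)]

@[fun_prop]
lemma measurable_ATSl (t : ℝ) : Measurable (ATSl α kbar σbar ηbar β δ t) := by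
  unfold ATSl; fun_prop

lemma exp_ATSphi_mul_mul_ATSLaplace {t : ℝ} (ht : t ≠ 0) :
    exp (ATSphi α kbar σbar ηbar β δ t * t) *
      ATSLaplace α kbar β t (t * σbar ^ 2 * (ηbar * t ^ δ)) = 1 := by
  have hL : 0 < ATSLaplace α kbar β t (t * σbar ^ 2 * (ηbar * t ^ δ)) := exp_pos _
  rw [ATSphi, div_mul_cancel₀ _ ht, exp_neg, exp_log hL, inv_mul_cancel₀ hL.ne']

lemma ATSCall_le_one_sub {t : ℝ} (ht : 0 < t) (hη : 0 ≤ ηbar) {μ : Measure ℝ}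
    [IsProbabilityMeasure μ] (hμ : μ (Iio 0) = 0)
    (hlap : ∀ u ≥ 0, ∫ x, exp (-u * x) ∂μ = ATSLaplace α kbar β t u) :
    ATSCall α kbar σbar ηbar β δ μ t ≤
      1 - ∫ z, stdN (ATSl α kbar σbar ηbar β δ t z - σbar * √(z * t) / 2) ∂μ := by
  set u := t * σbar ^ 2 * (ηbar * t ^ δ)
  set φ := ATSphi α kbar σbar ηbar β δ t
  have hu : 0 ≤ u := by have := rpow_pos_of_pos ht δ; positivity
  have hexp := integrable_exp_neg_mul hμ hu
  have hdom : ∀ z, exp (φ * t - u * z) *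
      stdN (ATSl α kbar σbar ηbar β δ t z + σbar * √(z * t) / 2) ≤ exp (φ * t) * exp (-u * z) :=
    fun z ↦ by
      rw [← exp_add, sub_eq_add_neg, ← neg_mul]
      exact mul_le_of_le_one_right (exp_pos _).le (stdN_le_one _)
  have hA : Integrable (fun z ↦ exp (φ * t - u * z) *
      stdN (ATSl α kbar σbar ηbar β δ t z + σbar * √(z * t) / 2)) μ :=
    (hexp.const_mul _).mono' (Measurable.aestronglyMeasurable (by fun_prop))
      (ae_of_all _ fun z ↦ by
        rw [norm_of_nonneg (mul_nonneg (exp_pos _).le (stdN_nonneg _))]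
        exact hdom z)
  have hB : Integrable (fun z ↦ stdN (ATSl α kbar σbar ηbar β δ t z - σbar * √(z * t) / 2)) μ :=
    (integrable_const 1).mono' (Measurable.aestronglyMeasurable (by fun_prop))
      (ae_of_all _ fun z ↦ by
        rw [norm_of_nonneg (stdN_nonneg _)]
        exact stdN_le_one _)
  have hAle : ∫ z, exp (φ * t - u * z) *
      stdN (ATSl α kbar σbar ηbar β δ t z + σbar * √(z * t) / 2) ∂μ ≤ 1 :=
    calc _ ≤ ∫ z, exp (φ * t) * exp (-u * z) ∂μ := integral_mono hA (hexp.const_mul _) hdom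
      _ = exp (φ * t) * ATSLaplace α kbar β t u := by rw [integral_const_mul, hlap u hu]
      _ = 1 := exp_ATSphi_mul_mul_ATSLaplace ht.ne'
  rw [ATSCall, integral_sub hA hB]
  linarith

end ATS

lemma tendsto_integral_stdN_ATSl_sub {α kbar σbar ηbar β : ℝ} (hα0 : 0 < α) (hα1 : α < 1)
    (hk : 0 < kbar) (hσ : 0 < σbar) (hη : 0 < ηbar) (hβl : 1 / 2 < β) (hβu : β < 1)
    {μ : ℝ → Measure ℝ} (hprob : ∀ t > 0, IsProbabilityMeasure (μ t))
    (hsupp : ∀ t > 0, μ t (Iio 0) = 0)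
    (hlap : ∀ t > 0, ∀ u ≥ 0, ∫ x, exp (-u * x) ∂μ t = ATSLaplace α kbar β t u) :
    Tendsto (fun t ↦ ∫ z, stdN (ATSl α kbar σbar ηbar β (-(1 / 2)) t z
      - σbar * √(z * t) / 2) ∂μ t) (𝓝[>] 0) (𝓝 1) := by
  have hpos : ∀ᶠ t in 𝓝[>] (0 : ℝ), 0 < t := self_mem_nhdsWithin
  have hprob' : ∀ᶠ t in 𝓝[>] 0, IsProbabilityMeasure (μ t) := hpos.mono hprob
  -- At `z = 0` the junk value `x / 0 = 0` makes the integrand `N(0) = 1/2`, so an atom of `μ_t`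
  -- at `0` has to be excluded.
  have hnoatom : ∀ᶠ t in 𝓝[>] 0, μ t (Iic 0) = 0 := hpos.mono fun t ht ↦
    have := hprob t ht
    measure_Iic_zero_eq_zero_of_tendsto_integral_exp (hsupp t ht)
      ((tendsto_ATSLaplace_atTop hα0 hα1 hk ht).congr'
        ((eventually_ge_atTop 0).mono fun u hu ↦ (hlap t ht u hu).symm))
  have hL : Tendsto (fun t ↦ ∫ x, exp (-x) ∂μ t) (𝓝[>] 0) (𝓝 1) :=
    (tendsto_ATSLaplace_nhdsGT_zero hα0 hα1 hk hβu zero_le_one).congr'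
      (hpos.mono fun t ht ↦ by simpa using (hlap t ht 1 zero_le_one).symm)
  exact tendsto_integral_of_tendsto_nhdsGT_zero hprob'
    (fun _ hz₀ ↦ tendsto_measureReal_Ioo_zero hprob' hnoatom hL hz₀)
    (tendsto_stdN_atTop.comp (tendsto_ATSl_sub_atTop hα0 hα1 hk hσ hη hβl))
    (fun _ _ ↦ stdN_nonneg _) (fun _ _ ↦ stdN_le_one _) (fun _ ↦ by fun_prop)

/-- Case 4: if `1/2 < β < 1` and `δ = −1/2`, then the skew term
satisfies `ξ̂_t → −√(π/2)` as `t → 0⁺`. -/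
theorem stmt18 (α kbar σbar ηbar β δ : ℝ) (hα : α ∈ Set.Ioo (0:ℝ) 1)
    (hk : 0 < kbar) (hσ : 0 < σbar) (hη : 0 < ηbar)
    (hβl : 1/2 < β) (hβu : β < 1) (hδ : δ = -(1/2))
    (μ : ℝ → Measure ℝ)
    (hprob : ∀ t > 0, IsProbabilityMeasure (μ t))
    (hsupp : ∀ t > 0, μ t (Set.Iio 0) = 0)
    (hlap : ∀ t > 0, ∀ u ≥ 0,
      (∫ x, Real.exp (-u * x) ∂(μ t)) = ATSLaplace α kbar β t u)
    (σhat : ℝ → ℝ) (hσpos : ∀ t > 0, 0 < σhat t)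
    (hiv : ∀ t > 0,
      stdN (σhat t * Real.sqrt t / 2) - stdN (-(σhat t * Real.sqrt t / 2)) =
        ATSCall α kbar σbar ηbar β δ (μ t) t) :
    Tendsto (fun t => ATSSkew α kbar σbar ηbar β δ (μ t) σhat t)
      (𝓝[>] (0:ℝ)) (𝓝 (-Real.sqrt (Real.pi / 2))) := by
  obtain ⟨hα0, hα1⟩ := hα
  subst hδ
  have hpos : ∀ᶠ t in 𝓝[>] (0 : ℝ), 0 < t := self_mem_nhdsWithin
  have hI := tendsto_integral_stdN_ATSl_sub (σbar := σbar) hα0 hα1 hk hσ hη hβl hβu hprob hsupp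
    hlap
  have hs : Tendsto (fun t ↦ σhat t * √t / 2) (𝓝[>] 0) (𝓝 0) := by
    refine tendsto_zero_of_stdN_sub_stdN_neg_le_one_sub
      (hpos.mono fun t ht ↦ by have := hσpos t ht; positivity) hI (hpos.mono fun t ht ↦ ?_)
    have := hprob t ht
    exact hiv t ht ▸ ATSCall_le_one_sub ht hη.le (hsupp t ht) (hlap t ht)
  have hneg : Tendsto (fun t ↦ -(σhat t * √t / 2)) (𝓝[>] 0) (𝓝 0) := by simpa using hs.neg
  have hnum := ((continuous_stdN.tendsto 0).comp hneg).sub hI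
  have hden := (continuous_stdNd.tendsto 0).comp hneg
  rw [← stdN_zero_sub_one_div_stdNd_zero]
  exact hnum.div hden (by rw [stdNd_zero]; positivity)
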